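/- arXiv:0902.4397 — 2 statements merged into one kernel-verified Lean document; each statement's English description precedes it below -/
import Mathlib

section
/- Let A = diag(a₁,…,aₙ) with all aᵢ > 0, D > 0, and let γ, p ∈ ℝⁿ satisfy (γ,γ) = 1 and (γ,p) = 0. Define ξ = (1/(D(γ,A⁻¹γ))) (Ap - (p,Aγ)γ). Then (γ,ξ) = 0 and p = ξ - D·I⁻¹(γ∧ξ)γ, where I⁻¹(γ∧ξ) = (A⁻¹γ)∧(A⁻¹ξ) - (1/D) γ∧ξ. -/
/-!
With `g = (γ, A⁻¹γ) > 0` and `s = (p, Aγ)` one has `A⁻¹ξ = (p - s A⁻¹γ) / (D g)`, hence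
`(A⁻¹ξ, γ) = -s / D` because `(γ, p) = 0`. Expanding the wedges by `(v ∧ w) x = (w, x) v - (v, x) w`
and using `(γ, γ) = 1`, `(γ, ξ) = 0` then gives `D I⁻¹(γ ∧ ξ) γ = ξ - p`.
-/

open Matrix

noncomputable def wedge {n : ℕ} (v w : Fin n → ℝ) : Matrix (Fin n) (Fin n) ℝ :=
  vecMulVec v w - vecMulVec w v

lemma wedge_mulVec {n : ℕ} (v w x : Fin n → ℝ) :
    wedge v w *ᵥ x = (w ⬝ᵥ x) • v - (v ⬝ᵥ x) • w := by
  simp only [wedge, sub_mulVec, vecMulVec_mulVec, op_smul_eq_smul]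

lemma smul_wedge_sub_wedge_mulVec {n : ℕ} {D : ℝ} (hD : D ≠ 0) {γ ξ : Fin n → ℝ}
    (hγγ : γ ⬝ᵥ γ = 1) (hγξ : γ ⬝ᵥ ξ = 0) (u w : Fin n → ℝ) :
    D • (wedge u w - (1 / D) • wedge γ ξ) *ᵥ γ
      = (D * (w ⬝ᵥ γ)) • u - (D * (u ⬝ᵥ γ)) • w + ξ := by
  rw [sub_mulVec, smul_mulVec, wedge_mulVec, wedge_mulVec, dotProduct_comm ξ, hγξ, hγγ,
    zero_smul, zero_sub, one_smul]
  simp only [smul_add, smul_sub, smul_neg, smul_smul, mul_one_div_cancel hD, one_smul,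
    sub_neg_eq_add]

lemma dotProduct_inv_mul_pos {ι K : Type*} [Fintype ι] [Field K] [LinearOrder K]
    [IsStrictOrderedRing K] {a γ : ι → K} (ha : ∀ i, 0 < a i)
    (hγ : γ ≠ 0) : 0 < γ ⬝ᵥ (a⁻¹ * γ) := by
  obtain ⟨i, hi⟩ := Function.ne_iff.mp hγ
  have hsq : γ ⬝ᵥ (a⁻¹ * γ) = ∑ j, (a j)⁻¹ * γ j ^ 2 :=
    Finset.sum_congr rfl fun j _ => by simp only [Pi.mul_apply, Pi.inv_apply]; ring
  rw [hsq]
  exact Finset.sum_pos' (fun j _ => by have := ha j; positivity)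
    ⟨i, Finset.mem_univ i, mul_pos (inv_pos.mpr (ha i)) (sq_pos_of_ne_zero hi)⟩

lemma dotProduct_smul_mul_sub_eq_zero {ι R : Type*} [Fintype ι] [CommRing R] {γ : ι → R}
    (hγγ : γ ⬝ᵥ γ = 1) (a p : ι → R) (c : R) :
    γ ⬝ᵥ (c • (a * p - (p ⬝ᵥ (a * γ)) • γ)) = 0 := by
  have : γ ⬝ᵥ (a * p) = p ⬝ᵥ (a * γ) :=
    Finset.sum_congr rfl fun j _ => by simp only [Pi.mul_apply]; ring
  rw [dotProduct_smul, dotProduct_sub, dotProduct_smul, hγγ, this, smul_eq_mul, smul_eq_mul,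
    mul_one, sub_self, mul_zero]

lemma inv_mul_smul_mul_sub {ι K : Type*} [Field K] {a : ι → K} (ha : ∀ i, a i ≠ 0)
    (p γ : ι → K) (c s : K) :
    a⁻¹ * (c • (a * p - s • γ)) = c • (p - s • (a⁻¹ * γ)) := by
  funext i
  simp only [Pi.mul_apply, Pi.smul_apply, Pi.sub_apply, Pi.inv_apply, smul_eq_mul]
  field_simp [ha i]

lemma eq_sub_smul_wedge_sub_wedge_mulVec {n : ℕ} {a : Fin n → ℝ} (ha : ∀ i, a i ≠ 0) {D : ℝ}
    (hD : D ≠ 0) {γ p : Fin n → ℝ} (hg : γ ⬝ᵥ (a⁻¹ * γ) ≠ 0) (hγγ : γ ⬝ᵥ γ = 1)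
    (hγp : γ ⬝ᵥ p = 0) {ξ : Fin n → ℝ}
    (hξ : ξ = (1 / (D * (γ ⬝ᵥ (a⁻¹ * γ)))) • (a * p - (p ⬝ᵥ (a * γ)) • γ)) :
    p = ξ - D • (wedge (a⁻¹ * γ) (a⁻¹ * ξ) - (1 / D) • wedge γ ξ) *ᵥ γ := by
  set g := γ ⬝ᵥ (a⁻¹ * γ)
  set s := p ⬝ᵥ (a * γ)
  have hγξ : γ ⬝ᵥ ξ = 0 := hξ ▸ dotProduct_smul_mul_sub_eq_zero hγγ a p _
  have hAξ : (D * g) • (a⁻¹ * ξ) = p - s • (a⁻¹ * γ) := by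
    rw [hξ, inv_mul_smul_mul_sub ha, smul_smul, mul_one_div_cancel (mul_ne_zero hD hg), one_smul]
  have hAξγ : D * ((a⁻¹ * ξ) ⬝ᵥ γ) = -s := by
    refine mul_right_cancel₀ hg ?_
    rw [mul_right_comm, ← smul_eq_mul, ← smul_dotProduct, hAξ, sub_dotProduct, smul_dotProduct,
      dotProduct_comm p, hγp, dotProduct_comm (a⁻¹ * γ), smul_eq_mul, zero_sub, neg_mul]
  rw [smul_wedge_sub_wedge_mulVec hD hγγ hγξ, hAξγ, dotProduct_comm (a⁻¹ * γ), hAξ]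
  module

theorem stmt6_general {n : ℕ} (a : Fin n → ℝ) (ha : ∀ i, 0 < a i)
    (D : ℝ) (hD : 0 < D) (γ p : Fin n → ℝ)
    (hγγ : γ ⬝ᵥ γ = 1) (hγp : γ ⬝ᵥ p = 0) :
    letI Ainv : (Fin n → ℝ) → (Fin n → ℝ) := fun v i => (a i)⁻¹ * v i
    letI ξ : Fin n → ℝ :=
      (1 / (D * (γ ⬝ᵥ Ainv γ))) • ((fun i => a i * p i) - (p ⬝ᵥ fun i => a i * γ i) • γ)
    γ ⬝ᵥ ξ = 0 ∧
    p = ξ - D • (wedge (Ainv γ) (Ainv ξ) - (1 / D) • wedge γ ξ).mulVec γ := by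
  have hg : 0 < γ ⬝ᵥ (a⁻¹ * γ) := dotProduct_inv_mul_pos ha (by rintro rfl; simp at hγγ)
  exact ⟨dotProduct_smul_mul_sub_eq_zero hγγ a p _,
    eq_sub_smul_wedge_sub_wedge_mulVec (fun i => (ha i).ne') hD.ne' hg.ne' hγγ hγp rfl⟩

theorem stmt6 {n : ℕ} (hn : 2 ≤ n) (a : Fin n → ℝ) (ha : ∀ i, 0 < a i)
    (D : ℝ) (hD : 0 < D) (γ p : Fin n → ℝ)
    (hγγ : γ ⬝ᵥ γ = 1) (hγp : γ ⬝ᵥ p = 0) :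
    letI Ainv : (Fin n → ℝ) → (Fin n → ℝ) := fun v i => (a i)⁻¹ * v i
    letI ξ : Fin n → ℝ :=
      (1 / (D * (γ ⬝ᵥ Ainv γ))) • ((fun i => a i * p i) - (p ⬝ᵥ fun i => a i * γ i) • γ)
    γ ⬝ᵥ ξ = 0 ∧
    p = ξ - D • (wedge (Ainv γ) (Ainv ξ) - (1 / D) • wedge γ ξ).mulVec γ :=
  stmt6_general a ha D hD γ p hγγ hγp
end

section
/- With A = diag(a₁,…,aₙ), aᵢ > 0, D > 0, γ, p ∈ ℝⁿ with (γ,γ)=1, (γ,p)=0, and ξ = (Ap - (p,Aγ)γ)/(D(γ,A⁻¹γ)), the skew-symmetric matrix ω := I⁻¹(γ∧ξ) = (A⁻¹γ)∧(A⁻¹ξ) - (1/D)γ∧ξ equals ω = (1/(D(γ,A⁻¹γ))) ( (A⁻¹γ)∧p - (1/D) γ∧(Ap) ). -/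
/-!
Both wedges on the left have a second factor of the form `c • (w - t • v)` with `v` their first
factor: `A⁻¹ξ = c • (p - (p, Aγ) • A⁻¹γ)` and `ξ = c • (Ap - (p, Aγ) • γ)` with
`c = 1 / (D (γ, A⁻¹γ))`. Since `v ∧ v = 0`, the multiples of `v` drop out and `c` factors out.
-/

open Matrix

section Wedge

variable {n : ℕ}

theorem wedge_self (v : Fin n → ℝ) : wedge v v = 0 :=
  sub_self _

theorem wedge_smul_right (v w : Fin n → ℝ) (c : ℝ) : wedge v (c • w) = c • wedge v w := by
  simp only [wedge, vecMulVec_smul, smul_vecMulVec, smul_sub]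

theorem wedge_sub_right (v w₁ w₂ : Fin n → ℝ) : wedge v (w₁ - w₂) = wedge v w₁ - wedge v w₂ := by
  simp only [wedge, vecMulVec_sub, sub_vecMulVec]
  abel

theorem wedge_smul_sub_smul_self_right (v w : Fin n → ℝ) (c t : ℝ) :
    wedge v (c • (w - t • v)) = c • wedge v w := by
  rw [wedge_smul_right, wedge_sub_right, wedge_smul_right, wedge_self, smul_zero, sub_zero]

end Wedge

theorem inv_mul_smul_mul_sub_s7 {n : ℕ} {a : Fin n → ℝ} (ha : ∀ i, a i ≠ 0) (c t : ℝ)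
    (p γ : Fin n → ℝ) :
    (fun i => (a i)⁻¹ * (c • ((fun i => a i * p i) - t • γ)) i) =
      c • (p - t • fun i => (a i)⁻¹ * γ i) := by
  funext i
  simp only [Pi.smul_apply, Pi.sub_apply, smul_eq_mul]
  field_simp [ha i]

theorem stmt7_general {n : ℕ} (a : Fin n → ℝ) (ha : ∀ i, 0 < a i)
    (D : ℝ) (γ p : Fin n → ℝ) :
    letI Ainv : (Fin n → ℝ) → (Fin n → ℝ) := fun v i => (a i)⁻¹ * v i
    letI ξ : Fin n → ℝ :=
      (1 / (D * (γ ⬝ᵥ Ainv γ))) • ((fun i => a i * p i) - (p ⬝ᵥ fun i => a i * γ i) • γ)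
    wedge (Ainv γ) (Ainv ξ) - (1 / D) • wedge γ ξ =
      (1 / (D * (γ ⬝ᵥ Ainv γ))) •
        (wedge (Ainv γ) p - (1 / D) • wedge γ (fun i => a i * p i)) := by
  beta_reduce
  rw [inv_mul_smul_mul_sub_s7 (fun i => (ha i).ne'), wedge_smul_sub_smul_self_right,
    wedge_smul_sub_smul_self_right, smul_sub, smul_comm]

theorem stmt7 {n : ℕ} (hn : 2 ≤ n) (a : Fin n → ℝ) (ha : ∀ i, 0 < a i)
    (D : ℝ) (hD : 0 < D) (γ p : Fin n → ℝ)
    (hγγ : γ ⬝ᵥ γ = 1) (hγp : γ ⬝ᵥ p = 0) :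
    letI Ainv : (Fin n → ℝ) → (Fin n → ℝ) := fun v i => (a i)⁻¹ * v i
    letI ξ : Fin n → ℝ :=
      (1 / (D * (γ ⬝ᵥ Ainv γ))) • ((fun i => a i * p i) - (p ⬝ᵥ fun i => a i * γ i) • γ)
    wedge (Ainv γ) (Ainv ξ) - (1 / D) • wedge γ ξ =
      (1 / (D * (γ ⬝ᵥ Ainv γ))) •
        (wedge (Ainv γ) p - (1 / D) • wedge γ (fun i => a i * p i)) :=
  stmt7_general a ha D γ p
end
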